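/- The term p(x,y,z) := (((x ⇒ y) ⊓ (z ⇒ z)) ⇒ z) ⊓ (((z ⇒ y) ⊓ (x ⇒ x)) ⇒ x) is a Maltsev term on O3: for all x, y in O3, p(x,x,y) = y and p(x,y,y) = x. -/

import Mathlib

inductive O3 : Type | zero | half | one
deriving DecidableEq

open O3

def oneg : O3 → O3
  | zero => one | one => zero | half => half

def oand : O3 → O3 → O3
  | half, half => half | half, one => one | half, zero => zero
  | one, half => one | one, one => one | one, zero => zero
  | zero, _ => zero

def oor : O3 → O3 → O3
  | half, half => half | half, one => one | half, zero => zero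
  | one, _ => one
  | zero, half => zero | zero, one => one | zero, zero => zero

def oimp : O3 → O3 → O3
  | half, y => y | one, y => y | zero, _ => half

/-- designated values -/
def desig (x : O3) : Prop := x = half ∨ x = one

/-- Kleene meet: minimum w.r.t. 0 < ½ < 1 -/
def kmeet : O3 → O3 → O3
  | zero, _ => zero | _, zero => zero
  | half, _ => half | _, half => half
  | one, one => one

/-- Kleene join: maximum w.r.t. 0 < ½ < 1 -/
def kjoin : O3 → O3 → O3
  | one, _ => one | _, one => one
  | half, _ => half | _, half => half
  | zero, zero => zero

/-- material implication ¬x ∨ y -/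
def bimp (x y : O3) : O3 := oor (oneg x) y

def maltsev (x y z : O3) : O3 :=
  kmeet (bimp (kmeet (bimp x y) (bimp z z)) z)
        (bimp (kmeet (bimp z y) (bimp x x)) x)

theorem maltsev_term : ∀ x y : O3, maltsev x x y = y ∧ maltsev x y y = x := by
  rintro (_ | _ | _) (_ | _ | _) <;> exact ⟨rfl, rfl⟩
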